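/- Let φ₁₁, φ₁₂ satisfy the Volterra integral equations above with continuous kernels. Then there is a constant K such that for all x ∈ [a,ξ₁] and all λ ∈ ℂ with |λ| ≥ 1, |φ₁₁(x,λ)| ≤ K |λ| e^{|Im λ| ρ₁ (x-a)} and |φ₁₂(x,λ)| ≤ K |λ| e^{|Im λ| ρ₁ (x-a)} (Gronwall-type bound). -/

import Mathlib

open intervalIntegral Complex

/-!
Put `μ = |Im λ| ρ₁`. Since `|sin w|, |cos w| ≤ e^{|Im w|}`, the free terms are bounded by
`C |λ| e^{μ (x-a)}` and the kernels by `M e^{μ (x-t)}` for `t ≤ x`, with `C`, `M` independent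
of `λ`. The weighted function `g(t) = e^{-μ (t-a)} (|φ₁₁(t)| + |φ₁₂(t)|)` then satisfies
`g(x) ≤ 2C|λ| + L ∫_a^x g` with `L` independent of `λ`, and Gronwall's inequality gives
`g ≤ 2C|λ| e^{L (ξ₁-a)}` on `[a, ξ₁]`.
-/

open Set

theorem le_mul_exp_of_le_add_mul_integral {g : ℝ → ℝ} {a b C L : ℝ} (hL : 0 ≤ L)
    (hg : ContinuousOn g (Icc a b)) (h : ∀ x ∈ Icc a b, g x ≤ C + L * ∫ t in a..x, g t) :
    ∀ x ∈ Icc a b, g x ≤ C * Real.exp (L * (x - a)) := by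
  set F : ℝ → ℝ := fun x => ∫ t in a..x, g t
  have hF : ∀ x ∈ Icc a b, HasDerivWithinAt F (g x) (Icc a b) x := fun x hx => by
    have := Fact.mk hx
    exact integral_hasDerivWithinAt_right
      ((hg.mono (Icc_subset_Icc_right hx.2)).intervalIntegrable_of_Icc hx.1)
      (hg.stronglyMeasurableAtFilter_nhdsWithin measurableSet_Icc x) (hg.continuousWithinAt hx)
  have hF_right : ∀ x ∈ Ico a b, HasDerivWithinAt F (g x) (Ici x) x := fun x hx =>
    (hF x (Ico_subset_Icc_self hx)).mono_of_mem_nhdsWithin <|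
      Filter.mem_of_superset (Ico_mem_nhdsGE hx.2)
        (Ico_subset_Icc_self.trans (Icc_subset_Icc_left hx.1))
  have hF_le : ∀ x ∈ Icc a b, F x ≤ gronwallBound 0 L C (x - a) :=
    le_gronwallBound_of_liminf_deriv_right_le (fun x hx => (hF x hx).continuousWithinAt)
      (fun x hx _ hr => (hF_right x hx).liminf_right_slope_le hr) (by simp [F])
      (fun x hx => by linarith [h x (Ico_subset_Icc_self hx)])
  intro x hx
  have hbound : L * gronwallBound 0 L C (x - a) = C * (Real.exp (L * (x - a)) - 1) := by
    rcases hL.eq_or_lt with rfl | hL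
    · simp [gronwallBound_K0]
    · rw [gronwallBound_of_K_ne_0 hL.ne']
      field_simp
      ring
  nlinarith [h x hx, mul_le_mul_of_nonneg_left (hF_le x hx) hL]

theorem norm_integral_add_integral_le {E : Type*} [NormedAddCommGroup E] [NormedSpace ℝ E]
    {F G : ℝ → E} {g : ℝ → ℝ} {a y N : ℝ} (hay : a ≤ y)
    (hg : IntervalIntegrable g MeasureTheory.volume a y)
    (hF : ∀ t ∈ Ioc a y, ‖F t‖ ≤ N * g t) (hG : ∀ t ∈ Ioc a y, ‖G t‖ ≤ N * g t) :
    ‖∫ t in a..y, (F t + ∫ s in a..y, G s)‖ ≤ (1 + (y - a)) * (N * ∫ t in a..y, g t) := by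
  have hNg := hg.const_mul N
  have hG_int : ‖∫ s in a..y, G s‖ ≤ N * ∫ t in a..y, g t := by
    rw [← integral_const_mul]
    exact norm_integral_le_of_norm_le hay (MeasureTheory.ae_of_all _ hG) hNg
  calc ‖∫ t in a..y, (F t + ∫ s in a..y, G s)‖
      ≤ ∫ t in a..y, (N * g t + N * ∫ s in a..y, g s) :=
        norm_integral_le_of_norm_le hay
          (MeasureTheory.ae_of_all _ fun t ht =>
            (norm_add_le _ _).trans (add_le_add (hF t ht) hG_int))
          (hNg.add intervalIntegrable_const)
    _ = (1 + (y - a)) * (N * ∫ t in a..y, g t) := by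
        rw [integral_add hNg intervalIntegrable_const, integral_const_mul, integral_const,
          smul_eq_mul]
        ring

theorem norm_mul_le_of_le_exp {R : Type*} [SeminormedRing R] {k u : R} {a y t μ M γ : ℝ}
    (hM : 0 ≤ M) (hk : ‖k‖ ≤ M * Real.exp (μ * (y - t)))
    (hu : ‖u‖ ≤ Real.exp (μ * (t - a)) * γ) :
    ‖k * u‖ ≤ M * Real.exp (μ * (y - a)) * γ :=
  calc ‖k * u‖ ≤ M * Real.exp (μ * (y - t)) * (Real.exp (μ * (t - a)) * γ) :=
        (norm_mul_le _ _).trans (mul_le_mul hk hu (norm_nonneg _) (by positivity))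
    _ = M * Real.exp (μ * (y - a)) * γ := by
        rw [show μ * (y - a) = μ * (y - t) + μ * (t - a) by ring, Real.exp_add]
        ring

theorem norm_add_integral_kernel_le {a y μ A M : ℝ} {c : ℂ} {K₁ K₂ φ₁ φ₂ : ℝ → ℂ}
    {g : ℝ → ℝ} (hay : a ≤ y) (hg : IntervalIntegrable g MeasureTheory.volume a y) (hM : 0 ≤ M)
    (hc : ‖c‖ ≤ A * Real.exp (μ * (y - a)))
    (hK₁ : ∀ t ∈ Icc a y, ‖K₁ t‖ ≤ M * Real.exp (μ * (y - t)))
    (hK₂ : ∀ t ∈ Icc a y, ‖K₂ t‖ ≤ M * Real.exp (μ * (y - t)))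
    (hφ₁ : ∀ t, ‖φ₁ t‖ ≤ Real.exp (μ * (t - a)) * g t)
    (hφ₂ : ∀ t, ‖φ₂ t‖ ≤ Real.exp (μ * (t - a)) * g t) :
    ‖c + ∫ t in a..y, (K₁ t * φ₁ t + ∫ t in a..y, K₂ t * φ₂ t)‖ ≤
      Real.exp (μ * (y - a)) * (A + (1 + (y - a)) * M * ∫ t in a..y, g t) :=
  calc _ ≤ A * Real.exp (μ * (y - a)) +
        (1 + (y - a)) * (M * Real.exp (μ * (y - a)) * ∫ t in a..y, g t) :=
        (norm_add_le _ _).trans <| add_le_add hc <| norm_integral_add_integral_le hay hg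
          (fun t ht => norm_mul_le_of_le_exp hM (hK₁ t (Ioc_subset_Icc_self ht)) (hφ₁ t))
          (fun t ht => norm_mul_le_of_le_exp hM (hK₂ t (Ioc_subset_Icc_self ht)) (hφ₂ t))
    _ = _ := by ring

/-- `∫ t in a..y, F t + ∫ t in a..y, G t` parses with the second integral inside the first,
so the equations of the main theorem have the nested shape used here. -/
theorem norm_add_norm_le_of_volterra_system {a b μ A M : ℝ} {φ₁ φ₂ b₁ b₂ : ℝ → ℂ}
    {K₁₁ K₁₂ K₂₁ K₂₂ : ℝ → ℝ → ℂ}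
    (hφ₁ : ContinuousOn φ₁ (Icc a b)) (hφ₂ : ContinuousOn φ₂ (Icc a b))
    (heq₁ : ∀ y ∈ Icc a b,
      φ₁ y = b₁ y + ∫ t in a..y, (K₁₁ y t * φ₁ t + ∫ t in a..y, K₁₂ y t * φ₂ t))
    (heq₂ : ∀ y ∈ Icc a b,
      φ₂ y = b₂ y + ∫ t in a..y, (K₂₁ y t * φ₁ t + ∫ t in a..y, K₂₂ y t * φ₂ t))
    (hb₁ : ∀ y ∈ Icc a b, ‖b₁ y‖ ≤ A * Real.exp (μ * (y - a)))
    (hb₂ : ∀ y ∈ Icc a b, ‖b₂ y‖ ≤ A * Real.exp (μ * (y - a)))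
    (hK₁₁ : ∀ y ∈ Icc a b, ∀ t ∈ Icc a y, ‖K₁₁ y t‖ ≤ M * Real.exp (μ * (y - t)))
    (hK₁₂ : ∀ y ∈ Icc a b, ∀ t ∈ Icc a y, ‖K₁₂ y t‖ ≤ M * Real.exp (μ * (y - t)))
    (hK₂₁ : ∀ y ∈ Icc a b, ∀ t ∈ Icc a y, ‖K₂₁ y t‖ ≤ M * Real.exp (μ * (y - t)))
    (hK₂₂ : ∀ y ∈ Icc a b, ∀ t ∈ Icc a y, ‖K₂₂ y t‖ ≤ M * Real.exp (μ * (y - t))) :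
    ∀ x ∈ Icc a b, ‖φ₁ x‖ + ‖φ₂ x‖ ≤
      2 * A * Real.exp (2 * M * (1 + (b - a)) * (b - a)) * Real.exp (μ * (x - a)) := by
  have hM : ∀ y ∈ Icc a b, 0 ≤ M := fun y hy => by
    simpa using (norm_nonneg _).trans (hK₁₁ y hy y ⟨hy.1, le_rfl⟩)
  set g : ℝ → ℝ := fun t => Real.exp (-(μ * (t - a))) * (‖φ₁ t‖ + ‖φ₂ t‖) with hg_def
  have hg : ContinuousOn g (Icc a b) := by fun_prop
  have hg_nonneg : ∀ t, 0 ≤ g t := fun t => by positivity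
  have h_sum : ∀ t, ‖φ₁ t‖ + ‖φ₂ t‖ = Real.exp (μ * (t - a)) * g t := fun t => by
    rw [hg_def, ← mul_assoc, ← Real.exp_add, add_neg_cancel, Real.exp_zero, one_mul]
  have h₁ : ∀ t, ‖φ₁ t‖ ≤ Real.exp (μ * (t - a)) * g t := fun t =>
    h_sum t ▸ le_add_of_nonneg_right (norm_nonneg _)
  have h₂ : ∀ t, ‖φ₂ t‖ ≤ Real.exp (μ * (t - a)) * g t := fun t =>
    h_sum t ▸ le_add_of_nonneg_left (norm_nonneg _)
  have key : ∀ y ∈ Icc a b, g y ≤ 2 * A + 2 * M * (1 + (b - a)) * ∫ t in a..y, g t := by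
    intro y hy
    have hgy : IntervalIntegrable g MeasureTheory.volume a y :=
      (hg.mono (Icc_subset_Icc_right hy.2)).intervalIntegrable_of_Icc hy.1
    have hI : 0 ≤ ∫ t in a..y, g t := integral_nonneg hy.1 fun t _ => hg_nonneg t
    have hφ₁y := (congrArg (‖·‖) (heq₁ y hy)).trans_le <| norm_add_integral_kernel_le hy.1 hgy
      (hM y hy) (hb₁ y hy) (hK₁₁ y hy) (hK₁₂ y hy) h₁ h₂
    have hφ₂y := (congrArg (‖·‖) (heq₂ y hy)).trans_le <| norm_add_integral_kernel_le hy.1 hgy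
      (hM y hy) (hb₂ y hy) (hK₂₁ y hy) (hK₂₂ y hy) h₁ h₂
    have hL : 2 * M * (1 + (y - a)) ≤ 2 * M * (1 + (b - a)) := by
      have := hM y hy
      gcongr
      exact hy.2
    have hexp := Real.exp_pos (μ * (y - a))
    rw [← mul_le_mul_iff_of_pos_left hexp, ← h_sum]
    nlinarith [mul_le_mul_of_nonneg_right hL hI]
  intro x hx
  have hab : a ≤ b := hx.1.trans hx.2
  have hM₀ := hM x hx
  have hgx := le_mul_exp_of_le_add_mul_integral (by nlinarith) hg key x hx
  have hA : 0 ≤ A := by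
    have := (norm_nonneg _).trans (hb₁ a ⟨le_rfl, hab⟩)
    rwa [sub_self, mul_zero, Real.exp_zero, mul_one] at this
  calc ‖φ₁ x‖ + ‖φ₂ x‖ = Real.exp (μ * (x - a)) * g x := h_sum x
    _ ≤ Real.exp (μ * (x - a)) * (2 * A * Real.exp (2 * M * (1 + (b - a)) * (x - a))) := by gcongr
    _ ≤ Real.exp (μ * (x - a)) * (2 * A * Real.exp (2 * M * (1 + (b - a)) * (b - a))) := by
        gcongr
        exact hx.2
    _ = _ := by ring

theorem norm_exp_mul_I_le (z : ℂ) : ‖exp (z * I)‖ ≤ Real.exp |z.im| := by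
  rw [norm_exp, mul_I_re]
  exact Real.exp_le_exp.2 (neg_le_abs _)

theorem norm_sin_le_exp_abs_im (z : ℂ) : ‖sin z‖ ≤ Real.exp |z.im| := by
  have h₁ := norm_exp_mul_I_le z
  have h₂ := norm_exp_mul_I_le (-z)
  rw [neg_im, abs_neg] at h₂
  calc ‖sin z‖ = ‖exp (-z * I) - exp (z * I)‖ / 2 := by
        rw [sin, norm_div, norm_mul, norm_I, mul_one, Complex.norm_two]
    _ ≤ (Real.exp |z.im| + Real.exp |z.im|) / 2 := by
        gcongr
        exact (norm_sub_le _ _).trans (add_le_add h₂ h₁)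
    _ = Real.exp |z.im| := by ring

theorem norm_cos_le_exp_abs_im (z : ℂ) : ‖cos z‖ ≤ Real.exp |z.im| := by
  have h₁ := norm_exp_mul_I_le z
  have h₂ := norm_exp_mul_I_le (-z)
  rw [neg_im, abs_neg] at h₂
  calc ‖cos z‖ = ‖exp (z * I) + exp (-z * I)‖ / 2 := by
        rw [cos, norm_div, Complex.norm_two]
    _ ≤ (Real.exp |z.im| + Real.exp |z.im|) / 2 := by
        gcongr
        exact (norm_add_le _ _).trans (add_le_add h₁ h₂)
    _ = Real.exp |z.im| := by ring

theorem abs_im_mul_ofReal_mul_sub (lam : ℂ) {ρ y t : ℝ} (hρ : 0 ≤ ρ) (hty : t ≤ y) :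
    |(lam * ρ * ((y : ℂ) - t)).im| = |lam.im| * ρ * (y - t) := by
  rw [← ofReal_sub, im_mul_ofReal, im_mul_ofReal, abs_mul, abs_mul, abs_of_nonneg hρ,
    abs_of_nonneg (sub_nonneg.2 hty)]

theorem norm_sin_mul_ofReal_mul_sub_le (lam : ℂ) {ρ y t : ℝ} (hρ : 0 ≤ ρ) (hty : t ≤ y) :
    ‖sin (lam * ρ * ((y : ℂ) - t))‖ ≤ Real.exp (|lam.im| * ρ * (y - t)) :=
  (norm_sin_le_exp_abs_im _).trans_eq (by rw [abs_im_mul_ofReal_mul_sub lam hρ hty])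

theorem norm_cos_mul_ofReal_mul_sub_le (lam : ℂ) {ρ y t : ℝ} (hρ : 0 ≤ ρ) (hty : t ≤ y) :
    ‖cos (lam * ρ * ((y : ℂ) - t))‖ ≤ Real.exp (|lam.im| * ρ * (y - t)) :=
  (norm_cos_le_exp_abs_im _).trans_eq (by rw [abs_im_mul_ofReal_mul_sub lam hρ hty])

theorem norm_mul_add_mul_le {R : Type*} [SeminormedRing R] {u v s₁ s₂ : R} {E : ℝ}
    (h₁ : ‖s₁‖ ≤ E) (h₂ : ‖s₂‖ ≤ E) : ‖u * s₁ + v * s₂‖ ≤ (‖u‖ + ‖v‖) * E :=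
  calc ‖u * s₁ + v * s₂‖ ≤ ‖u‖ * ‖s₁‖ + ‖v‖ * ‖s₂‖ :=
        (norm_add_le _ _).trans (add_le_add (norm_mul_le _ _) (norm_mul_le _ _))
    _ ≤ ‖u‖ * E + ‖v‖ * E := by gcongr
    _ = (‖u‖ + ‖v‖) * E := by ring

theorem norm_mul_add_mul_mul_ofReal_le {u v s₁ s₂ : ℂ} {P ρ E : ℝ} (hu : ‖u‖ ≤ P)
    (hv : ‖v‖ ≤ P) (h₁ : ‖s₁‖ ≤ E) (h₂ : ‖s₂‖ ≤ E) (hρ : 0 ≤ ρ) :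
    ‖(u * s₁ + v * s₂) * ρ‖ ≤ 2 * P * ρ * E := by
  have hE : 0 ≤ E := (norm_nonneg _).trans h₁
  rw [norm_mul, norm_real, Real.norm_of_nonneg hρ]
  calc ‖u * s₁ + v * s₂‖ * ρ ≤ (P + P) * E * ρ := by
        gcongr
        exact (norm_mul_add_mul_le h₁ h₂).trans (by gcongr)
    _ = 2 * P * ρ * E := by ring

theorem norm_sin_cos_kernel_le (lam : ℂ) {a b ρ P : ℝ} {u v : ℝ → ℂ} (hρ : 0 ≤ ρ)
    (hu : ∀ t ∈ Icc a b, ‖u t‖ ≤ P) (hv : ∀ t ∈ Icc a b, ‖v t‖ ≤ P) :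
    ∀ y ∈ Icc a b, ∀ t ∈ Icc a y,
      ‖(u t * sin (lam * ρ * ((y : ℂ) - t)) + v t * cos (lam * ρ * ((y : ℂ) - t))) * ρ‖ ≤
        2 * P * ρ * Real.exp (|lam.im| * ρ * (y - t)) := fun _ hy t ht =>
  norm_mul_add_mul_mul_ofReal_le (hu t ⟨ht.1, ht.2.trans hy.2⟩) (hv t ⟨ht.1, ht.2.trans hy.2⟩)
    (norm_sin_mul_ofReal_mul_sub_le lam hρ ht.2) (norm_cos_mul_ofReal_mul_sub_le lam hρ ht.2) hρ

theorem norm_cos_sin_kernel_le (lam : ℂ) {a b ρ P : ℝ} {u v : ℝ → ℂ} (hρ : 0 ≤ ρ)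
    (hu : ∀ t ∈ Icc a b, ‖u t‖ ≤ P) (hv : ∀ t ∈ Icc a b, ‖v t‖ ≤ P) :
    ∀ y ∈ Icc a b, ∀ t ∈ Icc a y,
      ‖(u t * cos (lam * ρ * ((y : ℂ) - t)) + v t * sin (lam * ρ * ((y : ℂ) - t))) * ρ‖ ≤
        2 * P * ρ * Real.exp (|lam.im| * ρ * (y - t)) := fun _ hy t ht =>
  norm_mul_add_mul_mul_ofReal_le (hu t ⟨ht.1, ht.2.trans hy.2⟩) (hv t ⟨ht.1, ht.2.trans hy.2⟩)
    (norm_cos_mul_ofReal_mul_sub_le lam hρ ht.2) (norm_sin_mul_ofReal_mul_sub_le lam hρ ht.2) hρ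

theorem norm_mul_ofReal_sub_ofReal_le {lam : ℂ} (hlam : 1 ≤ ‖lam‖) (α' α : ℝ) :
    ‖lam * α' - α‖ ≤ (|α'| + |α|) * ‖lam‖ :=
  calc ‖lam * α' - α‖ ≤ ‖lam‖ * |α'| + |α| := by
        simpa only [norm_mul, norm_real, Real.norm_eq_abs] using norm_sub_le (lam * α') (α : ℂ)
    _ ≤ (|α'| + |α|) * ‖lam‖ := by nlinarith [abs_nonneg α]

theorem volterra_growth_bound_general (a ξ₁ ρ₁ α₁ α₂ α₁' α₂' : ℝ)
    (hρ₁ : 0 < ρ₁)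
    (p q r : ℝ → ℝ)
    (hp : ContinuousOn p (Set.Icc a ξ₁)) (hq : ContinuousOn q (Set.Icc a ξ₁))
    (hr : ContinuousOn r (Set.Icc a ξ₁))
    (φ₁₁ φ₁₂ : ℂ → ℝ → ℂ)
    (hc₁ : ∀ lam : ℂ, ContinuousOn (φ₁₁ lam) (Set.Icc a ξ₁))
    (hc₂ : ∀ lam : ℂ, ContinuousOn (φ₁₂ lam) (Set.Icc a ξ₁))
    (heq₁ : ∀ (lam : ℂ), ∀ x ∈ Set.Icc a ξ₁,
      φ₁₁ lam x = -(lam * α₁' - α₁) * Complex.sin (lam * ρ₁ * ((x : ℂ) - a))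
        + (lam * α₂' - α₂) * Complex.cos (lam * ρ₁ * ((x : ℂ) - a))
        + ∫ t in a..x, ((p t : ℂ) * Complex.sin (lam * ρ₁ * ((x : ℂ) - t)) +
            (q t : ℂ) * Complex.cos (lam * ρ₁ * ((x : ℂ) - t))) * ρ₁ * φ₁₁ lam t
        + ∫ t in a..x, ((q t : ℂ) * Complex.sin (lam * ρ₁ * ((x : ℂ) - t)) +
            (r t : ℂ) * Complex.cos (lam * ρ₁ * ((x : ℂ) - t))) * ρ₁ * φ₁₂ lam t)
    (heq₂ : ∀ (lam : ℂ), ∀ x ∈ Set.Icc a ξ₁,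
      φ₁₂ lam x = (lam * α₁' - α₁) * Complex.cos (lam * ρ₁ * ((x : ℂ) - a))
        + (lam * α₂' - α₂) * Complex.sin (lam * ρ₁ * ((x : ℂ) - a))
        + ∫ t in a..x, (-(p t : ℂ) * Complex.cos (lam * ρ₁ * ((x : ℂ) - t)) +
            (q t : ℂ) * Complex.sin (lam * ρ₁ * ((x : ℂ) - t))) * ρ₁ * φ₁₁ lam t
        + ∫ t in a..x, (-(q t : ℂ) * Complex.cos (lam * ρ₁ * ((x : ℂ) - t)) +
            (r t : ℂ) * Complex.sin (lam * ρ₁ * ((x : ℂ) - t))) * ρ₁ * φ₁₂ lam t) :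
    ∃ K : ℝ, ∀ x ∈ Set.Icc a ξ₁, ∀ lam : ℂ, 1 ≤ ‖lam‖ →
      ‖φ₁₁ lam x‖ ≤
          K * ‖lam‖ * Real.exp (|lam.im| * ρ₁ * (x - a)) ∧
      ‖φ₁₂ lam x‖ ≤
          K * ‖lam‖ * Real.exp (|lam.im| * ρ₁ * (x - a)) := by
  obtain ⟨P, hP⟩ := isCompact_Icc.exists_bound_of_continuousOn (hp.prodMk (hq.prodMk hr))
  have hp' : ∀ t ∈ Icc a ξ₁, ‖(p t : ℂ)‖ ≤ P := fun t ht =>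
    (norm_real _).trans_le ((norm_fst_le _).trans (hP t ht))
  have hq' : ∀ t ∈ Icc a ξ₁, ‖(q t : ℂ)‖ ≤ P := fun t ht =>
    (norm_real _).trans_le ((norm_fst_le _).trans ((norm_snd_le _).trans (hP t ht)))
  have hr' : ∀ t ∈ Icc a ξ₁, ‖(r t : ℂ)‖ ≤ P := fun t ht =>
    (norm_real _).trans_le ((norm_snd_le _).trans ((norm_snd_le _).trans (hP t ht)))
  set Ca := |α₁'| + |α₁| + |α₂'| + |α₂|
  set L := 2 * (2 * P * ρ₁) * (1 + (ξ₁ - a))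
  refine ⟨2 * Ca * Real.exp (L * (ξ₁ - a)), fun x hx lam hlam => ?_⟩
  have hsin := fun {y : ℝ} => norm_sin_mul_ofReal_mul_sub_le lam (y := y) (t := a) hρ₁.le
  have hcos := fun {y : ℝ} => norm_cos_mul_ofReal_mul_sub_le lam (y := y) (t := a) hρ₁.le
  have hsum := norm_add_norm_le_of_volterra_system (hc₁ lam) (hc₂ lam) (heq₁ lam) (heq₂ lam)
    (fun y hy => (norm_mul_add_mul_le (hsin hy.1) (hcos hy.1)).trans_eq (by rw [norm_neg]))
    (fun y hy => norm_mul_add_mul_le (hcos hy.1) (hsin hy.1))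
    (norm_sin_cos_kernel_le lam hρ₁.le hp' hq') (norm_sin_cos_kernel_le lam hρ₁.le hq' hr')
    (norm_cos_sin_kernel_le lam hρ₁.le (fun t ht => (norm_neg _).trans_le (hp' t ht)) hq')
    (norm_cos_sin_kernel_le lam hρ₁.le (fun t ht => (norm_neg _).trans_le (hq' t ht)) hr')
    x hx
  have hA : ‖lam * α₁' - α₁‖ + ‖lam * α₂' - α₂‖ ≤ Ca * ‖lam‖ := by
    linarith [norm_mul_ofReal_sub_ofReal_le hlam α₁' α₁, norm_mul_ofReal_sub_ofReal_le hlam α₂' α₂]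
  have hφ : ‖φ₁₁ lam x‖ + ‖φ₁₂ lam x‖ ≤
      2 * Ca * Real.exp (L * (ξ₁ - a)) * ‖lam‖ * Real.exp (|lam.im| * ρ₁ * (x - a)) :=
    calc _ ≤ _ := hsum
      _ ≤ 2 * (Ca * ‖lam‖) * Real.exp (L * (ξ₁ - a)) * Real.exp (|lam.im| * ρ₁ * (x - a)) := by
          gcongr
      _ = _ := by ring
  exact ⟨(le_add_of_nonneg_right (norm_nonneg _)).trans hφ,
    (le_add_of_nonneg_left (norm_nonneg _)).trans hφ⟩

/-- Gronwall-type bound: solutions of the Volterra integral equations grow at most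
like `K|λ| e^{|Im λ| ρ₁ (x-a)}` on `[a,ξ₁]` for `|λ| ≥ 1`. -/
theorem volterra_growth_bound (a ξ₁ ρ₁ α₁ α₂ α₁' α₂' : ℝ)
    (haξ : a < ξ₁) (hρ₁ : 0 < ρ₁)
    (p q r : ℝ → ℝ)
    (hp : ContinuousOn p (Set.Icc a ξ₁)) (hq : ContinuousOn q (Set.Icc a ξ₁))
    (hr : ContinuousOn r (Set.Icc a ξ₁))
    (φ₁₁ φ₁₂ : ℂ → ℝ → ℂ)
    (hc₁ : ∀ lam : ℂ, ContinuousOn (φ₁₁ lam) (Set.Icc a ξ₁))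
    (hc₂ : ∀ lam : ℂ, ContinuousOn (φ₁₂ lam) (Set.Icc a ξ₁))
    (heq₁ : ∀ (lam : ℂ), ∀ x ∈ Set.Icc a ξ₁,
      φ₁₁ lam x = -(lam * α₁' - α₁) * Complex.sin (lam * ρ₁ * ((x : ℂ) - a))
        + (lam * α₂' - α₂) * Complex.cos (lam * ρ₁ * ((x : ℂ) - a))
        + ∫ t in a..x, ((p t : ℂ) * Complex.sin (lam * ρ₁ * ((x : ℂ) - t)) +
            (q t : ℂ) * Complex.cos (lam * ρ₁ * ((x : ℂ) - t))) * ρ₁ * φ₁₁ lam t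
        + ∫ t in a..x, ((q t : ℂ) * Complex.sin (lam * ρ₁ * ((x : ℂ) - t)) +
            (r t : ℂ) * Complex.cos (lam * ρ₁ * ((x : ℂ) - t))) * ρ₁ * φ₁₂ lam t)
    (heq₂ : ∀ (lam : ℂ), ∀ x ∈ Set.Icc a ξ₁,
      φ₁₂ lam x = (lam * α₁' - α₁) * Complex.cos (lam * ρ₁ * ((x : ℂ) - a))
        + (lam * α₂' - α₂) * Complex.sin (lam * ρ₁ * ((x : ℂ) - a))
        + ∫ t in a..x, (-(p t : ℂ) * Complex.cos (lam * ρ₁ * ((x : ℂ) - t)) +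
            (q t : ℂ) * Complex.sin (lam * ρ₁ * ((x : ℂ) - t))) * ρ₁ * φ₁₁ lam t
        + ∫ t in a..x, (-(q t : ℂ) * Complex.cos (lam * ρ₁ * ((x : ℂ) - t)) +
            (r t : ℂ) * Complex.sin (lam * ρ₁ * ((x : ℂ) - t))) * ρ₁ * φ₁₂ lam t) :
    ∃ K : ℝ, ∀ x ∈ Set.Icc a ξ₁, ∀ lam : ℂ, 1 ≤ ‖lam‖ →
      ‖φ₁₁ lam x‖ ≤
          K * ‖lam‖ * Real.exp (|lam.im| * ρ₁ * (x - a)) ∧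
      ‖φ₁₂ lam x‖ ≤
          K * ‖lam‖ * Real.exp (|lam.im| * ρ₁ * (x - a)) :=
  volterra_growth_bound_general a ξ₁ ρ₁ α₁ α₂ α₁' α₂' hρ₁ p q r hp hq hr φ₁₁ φ₁₂ hc₁ hc₂ heq₁ heq₂
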